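/- Let 𝓛 be a nonempty convex subset of a Coxeter group W, let u ∈ W, let i ∈ I, and let β be a transmitting root of Str(Sep(u)). If there exist real numbers a, a' > 0 such that a·uβ + a'·α_i ∈ Φ, then τ_i(u) = s_i u. -/

import Mathlib

open scoped Classical

noncomputable section

namespace BKBilliards

variable {I : Type*} [Fintype I] [DecidableEq I]
variable {M : CoxeterMatrix I} {W : Type*} [Group W]

/-- The simple root indexed by `i`, i.e. the `i`-th standard basis vector of `ℝ^I`. -/
def sroot (i : I) : I → ℝ := Pi.single i 1

/-- The data `(ρ, B)` constitutes the standard geometric representation of the Coxeter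
system `cs`, together with its induced symmetric bilinear form (with `μ = 1` on all
pairs whose Coxeter matrix entry is `∞`, encoded as `0`). -/
structure IsGeometric (cs : CoxeterSystem M W) (ρ : Representation ℝ W (I → ℝ))
    (B : LinearMap.BilinForm ℝ (I → ℝ)) : Prop where
  /-- `B(αᵢ, αᵢ') = -cos (π / m i i')` when `m i i' ≠ ∞`. -/
  form_apply_of_ne_zero : ∀ i i' : I, M i i' ≠ 0 →
    B (sroot i) (sroot i') = - Real.cos (Real.pi / (M i i' : ℝ))
  /-- `B(αᵢ, αᵢ') = -1` when `m i i' = ∞` (encoded as `0`). -/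
  form_apply_of_eq_zero : ∀ i i' : I, M i i' = 0 → B (sroot i) (sroot i') = -1
  /-- Each simple reflection acts by the reflection formula. -/
  simple_apply : ∀ (i : I) (v : I → ℝ), ρ (cs.simple i) v = v - (2 * B v (sroot i)) • sroot i

variable (ρ : Representation ℝ W (I → ℝ))

/-- The root system `Φ = {w αᵢ : w ∈ W, i ∈ I}`. -/
def Phi : Set (I → ℝ) := {v | ∃ (w : W) (i : I), v = ρ w (sroot i)}

/-- The half-space `H_β⁺ = {w ∈ W : w β ∈ Φ⁺}`: for a root `β`, membership amounts to
`w β` being a nonnegative combination of the simple roots. -/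
def Hplus (β : I → ℝ) : Set W := {w : W | 0 ≤ ρ w β}

/-- `R(𝓛) = {β ∈ Φ : 𝓛 ⊆ H_β⁺}`. -/
def RL (L : Set W) : Set (I → ℝ) := {β | β ∈ Phi ρ ∧ ∀ w ∈ L, w ∈ Hplus ρ β}

/-- `𝓛` is convex if it equals the intersection of all half-spaces containing it. -/
def IsConvex (L : Set W) : Prop := ∀ u : W, (∀ β ∈ RL ρ L, u ∈ Hplus ρ β) → u ∈ L

/-- The set of separators of `u`: `Sep(u) = {β ∈ R(𝓛) : u β ∈ Φ⁻}`. -/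
def Sep (L : Set W) (u : W) : Set (I → ℝ) := {β | β ∈ RL ρ L ∧ ρ u β ≤ 0}

variable (cs : CoxeterSystem M W)

/-- The noninvertible Bender–Knuth toggle `τᵢ` associated to the convex set `𝓛`. -/
def toggle (L : Set W) (i : I) (u : W) : W :=
  if ρ u⁻¹ (sroot i) ∈ RL ρ L then u else cs.simple i * u

/-- For a word `𝗐 = i_M ⋯ i_1` (a list whose head is `i_M`), the composition
`τ_𝗐 = τ_{i_M} ⋯ τ_{i_1}`. -/
def toggleWord (L : Set W) (l : List I) (u : W) : W :=
  l.foldr (fun i v => toggle ρ cs L i v) u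

/-- `β` dominates `β'` if `H_β⁺ ⊇ H_{β'}⁺`. -/
def Dominates (β β' : I → ℝ) : Prop := Hplus ρ β' ⊆ Hplus ρ β

/-- A small root: a positive root dominating no positive root other than itself. -/
def IsSmall (β : I → ℝ) : Prop :=
  β ∈ Phi ρ ∧ 0 ≤ β ∧ ∀ β', β' ∈ Phi ρ → 0 ≤ β' → Dominates ρ β β' → β' = β

/-- `β` is a transmitting root of the stratum `Str(R)`:
`β ∈ R(𝓛)` and `β = -w⁻¹ αᵢ` for some `w` with `Sep(w) = R` and some `i ∈ I`. -/
def IsTransmitting (L : Set W) (R : Set (I → ℝ)) (β : I → ℝ) : Prop :=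
  β ∈ RL ρ L ∧ ∃ (w : W) (i : I), Sep ρ L w = R ∧ β = - ρ w⁻¹ (sroot i)

end BKBilliards

open BKBilliards

/-!
If `γ = u⁻¹αᵢ` were in `R(𝓛)` we show `γ = -β`, impossible for a root `β ∈ R(𝓛)` when
`𝓛 ≠ ∅`. Write `β = -w⁻¹αⱼ` with `Sep(w) = Sep(u)`, so `uβ ≤ 0`. The root
`δ = a·uβ + a'·αᵢ` is positive or negative. If `δ ≥ 0`, the positive root `-uβ` satisfies
`a·(-uβ) ≤ a'·αᵢ`. If `δ ≤ 0`, then `u⁻¹δ = aβ + a'γ` lies in `Sep(u) = Sep(w)`, so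
`a'·wγ ≤ a·αⱼ`, and `wγ` is positive because `γ ∉ Sep(u)`. A positive root bounded by a multiple
of a simple root is supported on it, hence equals it since roots have `B`-norm `1`; so
`-uβ = αᵢ`, resp. `wγ = αⱼ`, i.e. `γ = -β` in both cases.

That every root is positive or negative is proved as in Humphreys, §5.4: if `ℓ(w sᵢ) > ℓ(w)`
and `sⱼ` is a right descent of `w`, split off the longest reduced right factor of `w` alternating
in `i, j` (ending in `j`); the remaining left factor has neither `i` nor `j` as a descent, and by
the braid relation the alternating factor is shorter than `m(i, j)`. In the dihedral group the
coefficients of its action on `αᵢ` are the values `U_k(cos(π/m))` of Chebyshev polynomials,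
nonnegative in that range.
-/

theorem Polynomial.Chebyshev.U_eval_cos_pi_div_nonneg {m : ℕ} (hm : 2 ≤ m) {k : ℤ}
    (hk₀ : -1 ≤ k) (hk : k + 1 ≤ m) : 0 ≤ (U ℝ k).eval (Real.cos (Real.pi / m)) := by
  have hθ : 0 < Real.pi / m := by positivity
  have hsin : 0 < Real.sin (Real.pi / m) := by
    apply Real.sin_pos_of_pos_of_lt_pi hθ
    exact div_lt_self Real.pi_pos (by exact_mod_cast hm)
  have hsin_k : 0 ≤ Real.sin ((k + 1) * (Real.pi / m)) := by
    apply Real.sin_nonneg_of_nonneg_of_le_pi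
    · have : (0 : ℝ) ≤ k + 1 := by exact_mod_cast (by omega : (0 : ℤ) ≤ k + 1)
      positivity
    · calc ((k : ℝ) + 1) * (Real.pi / m) ≤ m * (Real.pi / m) := by
            gcongr; exact_mod_cast hk
        _ = Real.pi := by field_simp
  rw [← U_real_cos] at hsin_k
  exact nonneg_of_mul_nonneg_left hsin_k hsin

namespace CoxeterSystem

variable {B : Type*} {M : CoxeterMatrix B} {W : Type*} [Group W] (cs : CoxeterSystem M W)

theorem wordProd_alternatingWord_succ_inv (i j : B) (n : ℕ) :
    (cs.wordProd (alternatingWord i j (n + 1)))⁻¹ =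
      (cs.wordProd (alternatingWord i j n))⁻¹ * cs.simple (if Even n then j else i) := by
  rw [alternatingWord_succ', wordProd_cons, mul_inv_rev, inv_simple]

theorem wordProd_alternatingWord_coxeter_eq {i j : B} (hM : M i j ≠ 0) :
    cs.wordProd (alternatingWord i j (M i j)) =
      cs.wordProd (alternatingWord i j (M i j - 1)) * cs.simple i := by
  obtain ⟨m, hm⟩ := Nat.exists_eq_succ_of_ne_zero hM
  have := cs.wordProd_braidWord_eq i j
  rw [braidWord, braidWord, M.symmetric j i, hm, alternatingWord_succ j i] at this
  rw [hm, this, Nat.succ_sub_one, wordProd_concat]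

theorem length_le_length_mul_inv_alternatingWord_add (w : W) (i j : B) (n : ℕ) :
    cs.length w ≤ cs.length (w * (cs.wordProd (alternatingWord i j n))⁻¹) + n := by
  have h := cs.length_le_length_mul_add_right w (cs.wordProd (alternatingWord i j n))⁻¹
  have := cs.length_wordProd_le (alternatingWord i j n)
  rw [length_inv, length_alternatingWord] at *
  omega

theorem monotone_length_mul_inv_alternatingWord_add (w : W) (i j : B) :
    Monotone fun n => cs.length (w * (cs.wordProd (alternatingWord i j n))⁻¹) + n := by
  refine monotone_nat_of_le_succ fun n => ?_
  have := cs.length_mul_simple (w * (cs.wordProd (alternatingWord i j n))⁻¹)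
    (if Even n then j else i)
  simp only [wordProd_alternatingWord_succ_inv, ← mul_assoc]
  omega

theorem lt_length_mul_inv_alternatingWord_coxeter_add {w : W} {i j : B}
    (hi : ¬ cs.IsRightDescent w i) (hM : M i j ≠ 0) :
    cs.length w < cs.length (w * (cs.wordProd (alternatingWord i j (M i j)))⁻¹) + M i j := by
  have hw : w * cs.simple i = w * (cs.wordProd (alternatingWord i j (M i j)))⁻¹ *
      cs.wordProd (alternatingWord i j (M i j - 1)) := by
    rw [cs.wordProd_alternatingWord_coxeter_eq hM, mul_inv_rev, inv_simple]
    group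
  have := cs.length_mul_le (w * (cs.wordProd (alternatingWord i j (M i j)))⁻¹)
    (cs.wordProd (alternatingWord i j (M i j - 1)))
  have := cs.length_wordProd_le (alternatingWord i j (M i j - 1))
  rw [length_alternatingWord, ← hw] at *
  unfold IsRightDescent at hi
  omega

theorem exists_length_mul_inv_alternatingWord_add_eq {w : W} {i j : B}
    (hj : cs.IsRightDescent w j) :
    ∃ n, 0 < n ∧ cs.length (w * (cs.wordProd (alternatingWord i j n))⁻¹) + n = cs.length w ∧
      cs.length w < cs.length (w * (cs.wordProd (alternatingWord i j (n + 1)))⁻¹) + (n + 1) := by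
  -- `n` is the length of the longest reduced right factor of `w` alternating in `i, j`.
  have hex : ∃ n, cs.length w <
      cs.length (w * (cs.wordProd (alternatingWord i j (n + 1)))⁻¹) + (n + 1) :=
    ⟨cs.length w, by omega⟩
  have hn₀ : 0 < Nat.find hex := Nat.pos_of_ne_zero fun h => by
    have := Nat.find_spec hex
    rw [h] at this
    simp only [zero_add, alternatingWord, List.concat_eq_append, List.nil_append,
      wordProd_singleton, inv_simple] at this
    have := cs.isRightDescent_iff.mp hj
    omega
  refine ⟨Nat.find hex, hn₀, le_antisymm ?_ (cs.length_le_length_mul_inv_alternatingWord_add ..),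
    Nat.find_spec hex⟩
  obtain ⟨t, ht⟩ := Nat.exists_eq_add_one.mpr hn₀
  rw [ht]
  exact not_lt.mp (Nat.find_min hex (by omega))

theorem exists_mul_alternatingWord_of_isRightDescent {w : W} {i j : B}
    (hi : ¬ cs.IsRightDescent w i) (hj : cs.IsRightDescent w j) :
    ∃ (x : W) (n : ℕ), w = x * cs.wordProd (alternatingWord i j n) ∧
      cs.length x < cs.length w ∧ ¬ cs.IsRightDescent x i ∧ ¬ cs.IsRightDescent x j ∧
      (M i j = 0 ∨ n < M i j) := by
  obtain ⟨n, hn₀, hn, hn₁⟩ := cs.exists_length_mul_inv_alternatingWord_add_eq (i := i) hj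
  obtain ⟨t, rfl⟩ := Nat.exists_eq_add_one.mpr hn₀
  set x := w * (cs.wordProd (alternatingWord i j (t + 1)))⁻¹ with hx
  have hx_prev : x * cs.simple (if Even t then j else i) =
      w * (cs.wordProd (alternatingWord i j t))⁻¹ := by
    rw [hx, wordProd_alternatingWord_succ_inv, ← mul_assoc, simple_mul_simple_cancel_right]
  have hprev := cs.length_le_length_mul_inv_alternatingWord_add w i j t
  rw [← hx_prev] at hprev
  rw [wordProd_alternatingWord_succ_inv, ← mul_assoc, ← hx] at hn₁
  have hx_desc : ∀ k, k = i ∨ k = j → ¬ cs.IsRightDescent x k := by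
    rintro k hk
    unfold IsRightDescent
    rcases Nat.even_or_odd t with ht | ht <;> rcases hk with rfl | rfl <;>
      simp_all [Nat.even_add_one, ← Nat.not_even_iff_odd] <;> omega
  refine ⟨x, t + 1, by simp [hx], by omega, hx_desc i (.inl rfl), hx_desc j (.inr rfl), ?_⟩
  by_contra! hM
  have hmono := cs.monotone_length_mul_inv_alternatingWord_add w i j hM.2
  have := cs.lt_length_mul_inv_alternatingWord_coxeter_add hi hM.1
  simp only [← hx] at hmono
  omega

end CoxeterSystem

namespace BKBilliards

open CoxeterSystem Polynomial.Chebyshev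

variable {I : Type*} [DecidableEq I] {M : CoxeterMatrix I} {W : Type*} [Group W]
  {cs : CoxeterSystem M W} {ρ : Representation ℝ W (I → ℝ)} {B : LinearMap.BilinForm ℝ (I → ℝ)}

theorem sroot_nonneg (i : I) : 0 ≤ sroot i := Pi.single_nonneg.mpr zero_le_one

theorem apply_mem_Phi (w : W) {v : I → ℝ} (hv : v ∈ Phi ρ) : ρ w v ∈ Phi ρ := by
  obtain ⟨w', k, rfl⟩ := hv
  exact ⟨w * w', k, by simp⟩

theorem smul_add_smul_mem_RL {L : Set W} {x y : I → ℝ} (hx : x ∈ RL ρ L) (hy : y ∈ RL ρ L)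
    {a b : ℝ} (ha : 0 ≤ a) (hb : 0 ≤ b) (h : a • x + b • y ∈ Phi ρ) :
    a • x + b • y ∈ RL ρ L := by
  refine ⟨h, fun v hv => ?_⟩
  simp only [Hplus, Set.mem_ofPred_eq, map_add, map_smul]
  exact add_nonneg (smul_nonneg ha (hx.2 v hv)) (smul_nonneg hb (hy.2 v hv))

theorem apply_nonpos_iff_of_Sep_eq {L : Set W} {u w : W} (hSep : Sep ρ L w = Sep ρ L u)
    {x : I → ℝ} (hx : x ∈ RL ρ L) : ρ w x ≤ 0 ↔ ρ u x ≤ 0 := by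
  simpa [Sep, hx] using Set.ext_iff.mp hSep x

namespace IsGeometric

theorem form_sroot_comm (hg : IsGeometric cs ρ B) (i j : I) :
    B (sroot i) (sroot j) = B (sroot j) (sroot i) := by
  by_cases h : M i j = 0
  · rw [hg.form_apply_of_eq_zero i j h, hg.form_apply_of_eq_zero j i (M.symmetric i j ▸ h)]
  · rw [hg.form_apply_of_ne_zero i j h, hg.form_apply_of_ne_zero j i (M.symmetric i j ▸ h),
      M.symmetric]

theorem form_comm [Finite I] (hg : IsGeometric cs ρ B) (x y : I → ℝ) : B x y = B y x := by
  have : B.flip = B := LinearMap.BilinForm.ext_basis (Pi.basisFun ℝ I) fun i j => by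
    simpa [sroot] using hg.form_sroot_comm j i
  exact (LinearMap.congr_fun₂ this x y).symm

theorem form_sroot_self (hg : IsGeometric cs ρ B) (i : I) : B (sroot i) (sroot i) = 1 := by
  simp [hg.form_apply_of_ne_zero i i (by simp)]

theorem simple_apply_sroot_self (hg : IsGeometric cs ρ B) (i : I) :
    ρ (cs.simple i) (sroot i) = -sroot i := by
  rw [hg.simple_apply, hg.form_sroot_self]
  module

theorem neg_mem_Phi (hg : IsGeometric cs ρ B) {v : I → ℝ} (hv : v ∈ Phi ρ) : -v ∈ Phi ρ := by
  obtain ⟨w, i, rfl⟩ := hv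
  exact ⟨w * cs.simple i, i, by
    rw [map_mul, Module.End.mul_apply, hg.simple_apply_sroot_self, map_neg]⟩

theorem form_map_map [Finite I] (hg : IsGeometric cs ρ B) (w : W) (x y : I → ℝ) :
    B (ρ w x) (ρ w y) = B x y := by
  induction w using cs.simple_induction generalizing x y with
  | simple i =>
    simp only [hg.simple_apply, map_sub, map_smul, LinearMap.sub_apply, LinearMap.smul_apply,
      smul_eq_mul, hg.form_sroot_self, hg.form_comm (sroot i) y]
    ring
  | one => simp
  | mul w w' hw hw' => simp [hw, hw']

theorem form_self_of_mem_Phi [Finite I] (hg : IsGeometric cs ρ B) {v : I → ℝ} (hv : v ∈ Phi ρ) :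
    B v v = 1 := by
  obtain ⟨w, i, rfl⟩ := hv
  rw [hg.form_map_map, hg.form_sroot_self]

theorem ne_zero_of_mem_Phi [Finite I] (hg : IsGeometric cs ρ B) {v : I → ℝ} (hv : v ∈ Phi ρ) :
    v ≠ 0 := by
  rintro rfl
  simpa using hg.form_self_of_mem_Phi hv

theorem apply_alternatingWord_sroot (hg : IsGeometric cs ρ B) (i j : I) (n : ℕ) :
    ρ (cs.wordProd (alternatingWord i j n)) (sroot i) =
      (U ℝ (if Even n then n else n - 1 : ℤ)).eval (-B (sroot i) (sroot j)) • sroot i +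
      (U ℝ (if Even n then n - 1 else n : ℤ)).eval (-B (sroot i) (sroot j)) • sroot j := by
  set c := -B (sroot i) (sroot j)
  have hji : B (sroot j) (sroot i) = -c := by rw [hg.form_sroot_comm, neg_neg]
  induction n with
  | zero => simp [alternatingWord]
  | succ n ih =>
    rw [alternatingWord_succ', wordProd_cons, map_mul, Module.End.mul_apply, ih]
    have hrec := congrArg (Polynomial.eval c) (U_add_one ℝ (n : ℤ))
    simp only [Polynomial.eval_sub, Polynomial.eval_mul, Polynomial.eval_ofNat,
      Polynomial.eval_X] at hrec
    rcases Nat.even_or_odd n with hn | hn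
    · have hn' : ¬ Even (n + 1) := by simpa [Nat.even_add_one] using hn
      simp only [hn, hn', if_true, if_false, hg.simple_apply, map_add, map_smul,
        LinearMap.add_apply, LinearMap.smul_apply, smul_eq_mul, hg.form_sroot_self]
      push_cast
      simp only [add_sub_cancel_right, hrec]
      module
    · have hn' : Even (n + 1) := by simpa [Nat.even_add_one] using hn
      simp only [Nat.not_even_iff_odd.mpr hn, hn', if_true, if_false, hg.simple_apply, map_add,
        map_smul, LinearMap.add_apply, LinearMap.smul_apply, smul_eq_mul, hg.form_sroot_self, hji]
      push_cast
      simp only [add_sub_cancel_right, hrec]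
      module

theorem exists_nonneg_apply_alternatingWord_sroot (hg : IsGeometric cs ρ B) {i j : I}
    (hij : i ≠ j) {n : ℕ} (hn : M i j = 0 ∨ n < M i j) :
    ∃ p q : ℝ, 0 ≤ p ∧ 0 ≤ q ∧
      ρ (cs.wordProd (alternatingWord i j n)) (sroot i) = p • sroot i + q • sroot j := by
  have hU : ∀ k : ℤ, -1 ≤ k → k ≤ n → 0 ≤ (U ℝ k).eval (-B (sroot i) (sroot j)) := by
    intro k hk₀ hk
    rcases hn with hM | hM
    · rw [hg.form_apply_of_eq_zero i j hM, neg_neg, U_eval_one]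
      exact_mod_cast (by omega : (0 : ℤ) ≤ k + 1)
    · have hM₂ : 2 ≤ M i j := by have := M.off_diagonal i j hij; omega
      rw [hg.form_apply_of_ne_zero i j (by omega), neg_neg]
      exact U_eval_cos_pi_div_nonneg hM₂ hk₀ (by omega)
  refine ⟨_, _, ?_, ?_, hg.apply_alternatingWord_sroot i j n⟩ <;>
    split_ifs <;> exact hU _ (by omega) (by omega)

theorem nonneg_apply_sroot_of_not_isRightDescent (hg : IsGeometric cs ρ B) {w : W}
    {i : I} (hi : ¬ cs.IsRightDescent w i) : 0 ≤ ρ w (sroot i) := by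
  induction h : cs.length w using Nat.strong_induction_on generalizing w i with
  | _ ℓw ih =>
    obtain rfl | hw := eq_or_ne w 1
    · simpa using sroot_nonneg i
    obtain ⟨j, hj⟩ := cs.exists_rightDescent_of_ne_one hw
    have hij : i ≠ j := by rintro rfl; exact hi hj
    obtain ⟨x, n, rfl, hx, hxi, hxj, hn⟩ := cs.exists_mul_alternatingWord_of_isRightDescent hi hj
    obtain ⟨p, q, hp, hq, hpq⟩ := hg.exists_nonneg_apply_alternatingWord_sroot hij hn
    rw [map_mul, Module.End.mul_apply, hpq, map_add, map_smul, map_smul]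
    exact add_nonneg (smul_nonneg hp (ih _ (h ▸ hx) hxi rfl))
      (smul_nonneg hq (ih _ (h ▸ hx) hxj rfl))

theorem apply_sroot_nonpos_of_isRightDescent (hg : IsGeometric cs ρ B) {w : W}
    {i : I} (hi : cs.IsRightDescent w i) : ρ w (sroot i) ≤ 0 := by
  have hwi := hg.nonneg_apply_sroot_of_not_isRightDescent
    (cs.isRightDescent_iff_not_isRightDescent_mul.mp hi)
  rwa [map_mul, Module.End.mul_apply, hg.simple_apply_sroot_self, map_neg, neg_nonneg] at hwi

theorem nonneg_or_nonpos_of_mem_Phi (hg : IsGeometric cs ρ B) {v : I → ℝ}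
    (hv : v ∈ Phi ρ) : 0 ≤ v ∨ v ≤ 0 := by
  obtain ⟨w, i, rfl⟩ := hv
  by_cases hi : cs.IsRightDescent w i
  · exact .inr (hg.apply_sroot_nonpos_of_isRightDescent hi)
  · exact .inl (hg.nonneg_apply_sroot_of_not_isRightDescent hi)

theorem eq_sroot_of_smul_le_smul_sroot [Finite I] (hg : IsGeometric cs ρ B) {v : I → ℝ}
    (hv : v ∈ Phi ρ) (hv₀ : 0 ≤ v) {c d : ℝ} (hc : 0 < c) {j : I}
    (hle : c • v ≤ d • sroot j) : v = sroot j := by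
  have hsupp : ∀ k ≠ j, v k = 0 := fun k hk => by
    have := hle k
    simp only [Pi.smul_apply, smul_eq_mul, sroot, Pi.single_eq_of_ne hk, mul_zero] at this
    exact le_antisymm (nonpos_of_mul_nonpos_right this hc) (hv₀ k)
  have hv_eq : v = v j • sroot j := by
    ext k
    by_cases hk : k = j <;> simp [sroot, hk, hsupp]
  have hnorm := hg.form_self_of_mem_Phi hv
  rw [hv_eq] at hnorm
  simp only [map_smul, LinearMap.smul_apply, smul_eq_mul, hg.form_sroot_self, mul_one] at hnorm
  have hvj₀ : 0 ≤ v j := hv₀ j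
  have hvj : v j = 1 := by nlinarith
  rw [hv_eq, hvj, one_smul]

theorem neg_notMem_RL [Finite I] (hg : IsGeometric cs ρ B) {L : Set W} (hL : L.Nonempty)
    {β : I → ℝ} (hβ : β ∈ RL ρ L) : -β ∉ RL ρ L := fun hβ' => by
  obtain ⟨v, hv⟩ := hL
  have hvβ : ρ v β = 0 := le_antisymm (by simpa [Hplus] using hβ'.2 v hv) (hβ.2 v hv)
  exact hg.ne_zero_of_mem_Phi (apply_mem_Phi v hβ.1) hvβ

theorem eq_neg_of_nonneg_smul_add_smul_sroot [Finite I] (hg : IsGeometric cs ρ B) {u : W}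
    {β γ : I → ℝ} (hβ : β ∈ Phi ρ) (hβu : ρ u β ≤ 0) {i : I} (huγ : ρ u γ = sroot i)
    {a a' : ℝ} (ha : 0 < a) (hδ : 0 ≤ a • ρ u β + a' • sroot i) : γ = -β := by
  have hle : a • -ρ u β ≤ a' • sroot i := by rwa [smul_neg, neg_le_iff_add_nonneg']
  have := hg.eq_sroot_of_smul_le_smul_sroot (hg.neg_mem_Phi (apply_mem_Phi u hβ))
    (neg_nonneg.mpr hβu) ha hle
  apply (ρ.apply_bijective u).injective
  rw [huγ, ← this, map_neg]

theorem eq_neg_of_smul_add_smul_sroot_nonpos [Finite I] (hg : IsGeometric cs ρ B) {L : Set W}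
    {u w : W} (hSep : Sep ρ L w = Sep ρ L u) {β γ : I → ℝ} (hβ : β ∈ RL ρ L)
    (hγ : γ ∈ RL ρ L) {i j : I} (hwβ : ρ w β = -sroot j) (huγ : ρ u γ = sroot i) {a a' : ℝ}
    (ha : 0 < a) (ha' : 0 < a') (hroot : a • ρ u β + a' • sroot i ∈ Phi ρ)
    (hδ : a • ρ u β + a' • sroot i ≤ 0) : γ = -β := by
  have hu : ρ u (a • β + a' • γ) = a • ρ u β + a' • sroot i := by simp [huγ]
  have hmem : a • β + a' • γ ∈ RL ρ L := smul_add_smul_mem_RL hβ hγ ha.le ha'.le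
    (by simpa [← hu] using apply_mem_Phi u⁻¹ hroot)
  have hw : a' • ρ w γ ≤ a • sroot j := by
    have := (apply_nonpos_iff_of_Sep_eq hSep hmem).mpr (hu ▸ hδ)
    rwa [map_add, map_smul, map_smul, hwβ, smul_neg, neg_add_nonpos_iff] at this
  have hwγ : 0 ≤ ρ w γ := by
    refine (hg.nonneg_or_nonpos_of_mem_Phi (apply_mem_Phi w hγ.1)).resolve_right fun h => ?_
    have := (apply_nonpos_iff_of_Sep_eq hSep hγ).mp h i
    norm_num [huγ, sroot] at this
  have := hg.eq_sroot_of_smul_le_smul_sroot (apply_mem_Phi w hγ.1) hwγ ha' hw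
  apply (ρ.apply_bijective w).injective
  rw [this, map_neg, hwβ, neg_neg]

end IsGeometric

end BKBilliards

theorem toggle_of_pos_combination_root_general
    {I : Type*} [Fintype I] [DecidableEq I] {M : CoxeterMatrix I} {W : Type*} [Group W]
    (cs : CoxeterSystem M W) (ρ : Representation ℝ W (I → ℝ))
    (B : LinearMap.BilinForm ℝ (I → ℝ)) (hgeom : IsGeometric cs ρ B)
    (L : Set W) (hL : L.Nonempty)
    (u : W) (i : I) (β : I → ℝ)
    (hβ : IsTransmitting ρ L (Sep ρ L u) β)
    (a a' : ℝ) (ha : 0 < a) (ha' : 0 < a')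
    (hroot : a • ρ u β + a' • sroot i ∈ Phi ρ) :
    toggle ρ cs L i u = cs.simple i * u := by
  obtain ⟨hβR, w, j, hSep, hβw⟩ := hβ
  refine if_neg fun hγ => hgeom.neg_notMem_RL hL hβR ?_
  have hwβ : ρ w β = -sroot j := by rw [hβw, map_neg, ρ.self_inv_apply]
  have huγ : ρ u (ρ u⁻¹ (sroot i)) = sroot i := ρ.self_inv_apply u _
  have hβu : ρ u β ≤ 0 :=
    (apply_nonpos_iff_of_Sep_eq hSep hβR).mp (hwβ ▸ neg_nonpos.mpr (sroot_nonneg j))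
  rcases hgeom.nonneg_or_nonpos_of_mem_Phi hroot with hδ | hδ
  · rwa [← hgeom.eq_neg_of_nonneg_smul_add_smul_sroot hβR.1 hβu huγ ha hδ]
  · rwa [← hgeom.eq_neg_of_smul_add_smul_sroot_nonpos hSep hβR hγ hwβ huγ ha ha' hroot hδ]

/-- If `β` is a transmitting root of `Str(Sep(u))` and there exist
`a, a' > 0` with `a·uβ + a'·αᵢ ∈ Φ`, then `τᵢ(u) = sᵢ u`. -/
theorem toggle_of_pos_combination_root
    {I : Type*} [Fintype I] [DecidableEq I] {M : CoxeterMatrix I} {W : Type*} [Group W]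
    (cs : CoxeterSystem M W) (ρ : Representation ℝ W (I → ℝ))
    (B : LinearMap.BilinForm ℝ (I → ℝ)) (hgeom : IsGeometric cs ρ B)
    (L : Set W) (hL : L.Nonempty) (hconv : IsConvex ρ L)
    (u : W) (i : I) (β : I → ℝ)
    (hβ : IsTransmitting ρ L (Sep ρ L u) β)
    (a a' : ℝ) (ha : 0 < a) (ha' : 0 < a')
    (hroot : a • ρ u β + a' • sroot i ∈ Phi ρ) :
    toggle ρ cs L i u = cs.simple i * u :=
  toggle_of_pos_combination_root_general cs ρ B hgeom L hL u i β hβ a a' ha ha' hroot
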